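/- arXiv:2304.13374 — 3 statements merged into one kernel-verified Lean document; each statement's English description precedes it below -/
import Mathlib

section
/- The relaxed Tree-Wasserstein distance W(μ, ν) = ∑_{v ∈ X} w_v |∑_{x ∈ X_leaf} α_{vx}(μ(x) − ν(x))|, with w_v ≥ 0 and α_{vx} ∈ [0,1], is a negative definite kernel on the set of probability measures on X_leaf: for any measures μ_1,...,μ_n and reals c_1,...,c_n with ∑ c_i = 0, ∑_{i,j} c_i c_j W(μ_i, μ_j) ≤ 0. -/
/-!
`|a - b| = a + b - 2 min a b`, and the terms `a + b` are killed by `∑ cᵢ = 0`; after shifting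
all points to `[0, ∞)`, `min a b = ∫ 𝟙_{(0,a]} 𝟙_{(0,b]}` is a Gram kernel, hence positive
semidefinite. So `|a - b|` is conditionally negative definite on `ℝ`, and so is the relaxed
Tree-Wasserstein distance: a nonnegative combination of pullbacks of it along the linear maps
`μ ↦ ∑ₓ α_{vx} μ(x)`.
-/

open MeasureTheory Set

section QuadraticForms

variable {ι : Type*} [Fintype ι]

theorem sum_sum_mul_mul_add_add_eq {c : ι → ℝ} (hc : ∑ i, c i = 0) (f g : ι → ℝ)
    (k : ι → ι → ℝ) :
    ∑ i, ∑ j, c i * c j * (f i + g j + k i j) = ∑ i, ∑ j, c i * c j * k i j := by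
  have hfg : ∑ i, ∑ j, c i * c j * (f i + g j)
      = (∑ i, c i * f i) * ∑ j, c j + (∑ i, c i) * ∑ j, c j * g j := by
    rw [Finset.sum_mul_sum, Finset.sum_mul_sum, ← Finset.sum_add_distrib]
    refine Finset.sum_congr rfl fun i _ => ?_
    rw [← Finset.sum_add_distrib]
    exact Finset.sum_congr rfl fun j _ => by ring
  simp only [mul_add (c _ * c _) _ (k _ _), Finset.sum_add_distrib, hfg, hc, mul_zero, zero_mul,
    zero_add]

theorem sum_sum_mul_mul_mul_left (c : ι → ℝ) (r : ℝ) (k : ι → ι → ℝ) :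
    ∑ i, ∑ j, c i * c j * (r * k i j) = r * ∑ i, ∑ j, c i * c j * k i j := by
  simp only [Finset.mul_sum]
  exact Finset.sum_congr rfl fun i _ => Finset.sum_congr rfl fun j _ => by ring

theorem indicator_Ioc_mul_indicator_Ioc (a b t : ℝ) :
    (Ioc 0 a).indicator (1 : ℝ → ℝ) t * (Ioc 0 b).indicator 1 t
      = (Ioc 0 (min a b)).indicator 1 t := by
  rw [← Pi.mul_apply, ← inter_indicator_one, Ioc_inter_Ioc, max_self]

theorem integral_indicator_Ioc_mul_indicator_Ioc {a b : ℝ} (ha : 0 ≤ a) (hb : 0 ≤ b) :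
    ∫ t, (Ioc 0 a).indicator (1 : ℝ → ℝ) t * (Ioc 0 b).indicator 1 t = min a b := by
  simp_rw [indicator_Ioc_mul_indicator_Ioc]
  rw [integral_indicator_one measurableSet_Ioc, Real.volume_real_Ioc_of_le (le_min ha hb),
    sub_zero]

theorem integrable_indicator_Ioc_mul_indicator_Ioc (a b : ℝ) :
    Integrable fun t => (Ioc 0 a).indicator (1 : ℝ → ℝ) t * (Ioc 0 b).indicator 1 t := by
  simp_rw [indicator_Ioc_mul_indicator_Ioc]
  exact (integrable_indicator_iff measurableSet_Ioc).2 (integrableOn_const measure_Ioc_lt_top.ne)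

theorem sum_sum_mul_mul_min_nonneg {b : ι → ℝ} (hb : ∀ i, 0 ≤ b i) (c : ι → ℝ) :
    0 ≤ ∑ i, ∑ j, c i * c j * min (b i) (b j) := by
  set e : ι → ℝ → ℝ := fun i => (Ioc 0 (b i)).indicator 1
  have hint : ∀ i j, Integrable fun t => c i * c j * (e i t * e j t) := fun i j =>
    (integrable_indicator_Ioc_mul_indicator_Ioc _ _).const_mul _
  calc (0 : ℝ) ≤ ∫ t, (∑ i, c i * e i t) ^ 2 := integral_nonneg fun t => sq_nonneg _
    _ = ∫ t, ∑ i, ∑ j, c i * c j * (e i t * e j t) := by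
        congr 1
        ext t
        rw [sq, Finset.sum_mul_sum]
        exact Finset.sum_congr rfl fun i _ => Finset.sum_congr rfl fun j _ => by ring
    _ = ∑ i, ∑ j, c i * c j * min (b i) (b j) := by
        rw [integral_finsetSum _ fun i _ => integrable_finsetSum _ fun j _ => hint i j]
        refine Finset.sum_congr rfl fun i _ => ?_
        rw [integral_finsetSum _ fun j _ => hint i j]
        refine Finset.sum_congr rfl fun j _ => ?_
        rw [integral_const_mul, integral_indicator_Ioc_mul_indicator_Ioc (hb i) (hb j)]

theorem sum_sum_mul_mul_min_nonneg_of_sum_eq_zero (a : ι → ℝ) {c : ι → ℝ}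
    (hc : ∑ i, c i = 0) : 0 ≤ ∑ i, ∑ j, c i * c j * min (a i) (a j) := by
  -- `-m` bounds every `a i` from below even when `ι` is empty.
  set m := ∑ i, |a i|
  have hshift : ∀ i, 0 ≤ a i + m := fun i =>
    neg_le_iff_add_nonneg.1 ((neg_abs_le _).trans' (neg_le_neg
      (Finset.single_le_sum (fun j _ => abs_nonneg (a j)) (Finset.mem_univ i))))
  have hmin : ∀ i j, min (a i) (a j) = -m + 0 + min (a i + m) (a j + m) := fun i j => by
    rw [min_add_add_right]; ring
  simp only [hmin, sum_sum_mul_mul_add_add_eq hc (fun _ => -m) (fun _ => 0)]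
  exact sum_sum_mul_mul_min_nonneg hshift c

end QuadraticForms

/-- Conditional negative definiteness; the paper calls such kernels negative definite. -/
def IsCondNegDef {X : Type*} (k : X → X → ℝ) : Prop :=
  ∀ (n : ℕ) (x : Fin n → X) (c : Fin n → ℝ), ∑ i, c i = 0 →
    ∑ i, ∑ j, c i * c j * k (x i) (x j) ≤ 0

namespace IsCondNegDef

variable {X : Type*} {k : X → X → ℝ}

theorem comp (hk : IsCondNegDef k) {Y : Type*} (f : Y → X) :
    IsCondNegDef fun a b => k (f a) (f b) :=
  fun n x c hc => hk n (f ∘ x) c hc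

theorem const_mul (hk : IsCondNegDef k) {r : ℝ} (hr : 0 ≤ r) :
    IsCondNegDef fun a b => r * k a b := by
  intro n x c hc
  rw [sum_sum_mul_mul_mul_left c r fun i j => k (x i) (x j)]
  exact mul_nonpos_of_nonneg_of_nonpos hr (hk n x c hc)

theorem sum {ι : Type*} {s : Finset ι} {k : ι → X → X → ℝ}
    (hk : ∀ v ∈ s, IsCondNegDef (k v)) : IsCondNegDef fun a b => ∑ v ∈ s, k v a b := by
  intro n x c hc
  calc ∑ i, ∑ j, c i * c j * ∑ v ∈ s, k v (x i) (x j)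
      = ∑ v ∈ s, ∑ i, ∑ j, c i * c j * k v (x i) (x j) := by
        simp_rw [Finset.mul_sum, Finset.sum_comm (s := s)]
    _ ≤ 0 := Finset.sum_nonpos fun v hv => hk v hv n x c hc

end IsCondNegDef

theorem isCondNegDef_abs_sub : IsCondNegDef fun a b : ℝ => |a - b| := by
  intro n a c hc
  have habs : ∀ i j, |a i - a j| = a i + a j + -2 * min (a i) (a j) := fun i j => by
    rw [← max_sub_min_eq_abs', ← min_add_max (a i) (a j)]; ring
  simp only [habs, sum_sum_mul_mul_add_add_eq hc a a,
    sum_sum_mul_mul_mul_left c (-2) fun i j => min (a i) (a j)]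
  linarith [sum_sum_mul_mul_min_nonneg_of_sum_eq_zero a hc]

theorem stmt10_general {V L : Type*} [Fintype V] [Fintype L]
    (α : V → L → ℝ)
    (w : V → ℝ) (hw : ∀ v, 0 ≤ w v)
    (n : ℕ) (μ : Fin n → L → ℝ)
    (c : Fin n → ℝ) (hc : ∑ i, c i = 0) :
    ∑ i, ∑ j, c i * c j * (∑ v, w v * |∑ x, α v x * (μ i x - μ j x)|) ≤ 0 := by
  have hW : IsCondNegDef fun μ ν : L → ℝ => ∑ v, w v * |∑ x, α v x * (μ x - ν x)| := by
    simp only [mul_sub, Finset.sum_sub_distrib]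
    exact IsCondNegDef.sum fun v _ =>
      (isCondNegDef_abs_sub.comp fun μ : L → ℝ => ∑ x, α v x * μ x).const_mul (hw v)
  exact hW n μ c hc

/-- the relaxed Tree-Wasserstein distance
`W(μ,ν) = ∑_v w_v |∑_x α_{vx}(μ x - ν x)|` (with `w ≥ 0`, `α ∈ [0,1]`) is a negative
definite kernel on probability measures on the leaf set: for any probability measures
`μ₁,…,μₙ` and reals `c₁,…,cₙ` with `∑ cᵢ = 0`, `∑_{i,j} cᵢ cⱼ W(μᵢ, μⱼ) ≤ 0`. -/
theorem stmt10 {V L : Type*} [Fintype V] [Fintype L]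
    (α : V → L → ℝ) (hα : ∀ v x, α v x ∈ Set.Icc (0 : ℝ) 1)
    (w : V → ℝ) (hw : ∀ v, 0 ≤ w v)
    (n : ℕ) (μ : Fin n → L → ℝ)
    (hμ0 : ∀ i x, 0 ≤ μ i x) (hμ1 : ∀ i, ∑ x, μ i x = 1)
    (c : Fin n → ℝ) (hc : ∑ i, c i = 0) :
    ∑ i, ∑ j, c i * c j * (∑ v, w v * |∑ x, α v x * (μ i x - μ j x)|) ≤ 0 :=
  stmt10_general α w hw n μ c hc
end

section
/- Let A be a strictly upper triangular matrix in [0,1]^{N×N} with A^T 1_N = (0,1,...,1)^T (a soft tree, i.e., each column s ≥ 2 of A is a probability vector over earlier nodes). Then every entry of (I − A)^{-1} lies in [0, 1], and for each column r, the entries α_{sr} of (I − A)^{-1} satisfy α_{rr} = 1. -/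
/-- for a soft tree, i.e. a strictly upper triangular matrix `A` with entries
in `[0,1]` such that `Aᵀ 1 = (0,1,…,1)ᵀ` (every column except the first is a probability
vector), every entry of `(I - A)⁻¹` lies in `[0,1]`, and the diagonal entries satisfy
`α_{rr} = 1`. -/
theorem stmt11 {N : ℕ} (hN : 0 < N) (A : Matrix (Fin N) (Fin N) ℝ)
    (h01 : ∀ i j, A i j ∈ Set.Icc (0 : ℝ) 1)
    (hupper : ∀ i j : Fin N, j ≤ i → A i j = 0)
    (hcol : ∀ j : Fin N, (∑ i, A i j) = if j = ⟨0, hN⟩ then 0 else 1) :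
    (∀ s r : Fin N, (1 - A)⁻¹ s r ∈ Set.Icc (0 : ℝ) 1) ∧
    (∀ r : Fin N, (1 - A)⁻¹ r r = 1) := by
  set B : Matrix (Fin N) (Fin N) ℝ := ∑ k ∈ Finset.range N, A ^ k with hBdef
  -- powers of A vanish below the shifted diagonal
  have pownz : ∀ k, ∀ i j : Fin N, (j : ℕ) < (i : ℕ) + k → (A ^ k) i j = 0 := by
    intro k
    induction k with
    | zero =>
      intro i j h
      rw [pow_zero]
      exact Matrix.one_apply_ne (by intro e; subst e; omega)
    | succ k ih =>
      intro i j h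
      rw [pow_succ', Matrix.mul_apply]
      apply Finset.sum_eq_zero
      intro m _
      rcases le_or_gt (m : ℕ) (i : ℕ) with hm | hm
      · rw [hupper i m (Fin.le_def.mpr hm), zero_mul]
      · rw [ih m j (by omega), mul_zero]
  have hAN : A ^ N = 0 := by
    ext i j
    simpa using pownz N i j (by omega)
  -- B * A = B - 1
  have hBA : B * A = B - 1 := by
    have h := geom_sum_mul A N
    rw [hAN, zero_sub, mul_sub, mul_one, sub_eq_iff_eq_add] at h
    rw [h]; abel
  have hB1 : B = 1 + B * A := by rw [hBA]; abel
  have hrec : ∀ s r : Fin N,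
      B s r = (1 : Matrix (Fin N) (Fin N) ℝ) s r + ∑ m, B s m * A m r := by
    intro s r
    conv_lhs => rw [hB1]
    simp [Matrix.add_apply, Matrix.mul_apply]
  have hBapply : ∀ s r : Fin N, B s r = ∑ k ∈ Finset.range N, (A ^ k) s r := by
    intro s r; rw [hBdef]; simp [Matrix.sum_apply]
  -- nonnegativity
  have hApownn : ∀ k, ∀ i j : Fin N, 0 ≤ (A ^ k) i j := by
    intro k
    induction k with
    | zero =>
      intro i j
      rw [pow_zero, Matrix.one_apply]
      split <;> norm_num
    | succ k ih =>
      intro i j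
      rw [pow_succ, Matrix.mul_apply]
      exact Finset.sum_nonneg fun m _ => mul_nonneg (ih i m) (h01 m j).1
  have hBnn : ∀ s r : Fin N, 0 ≤ B s r := by
    intro s r
    rw [hBapply]
    exact Finset.sum_nonneg fun k _ => hApownn k s r
  -- B vanishes strictly below the diagonal
  have hzero : ∀ s r : Fin N, (r : ℕ) < (s : ℕ) → B s r = 0 := by
    intro s r h
    rw [hBapply]
    exact Finset.sum_eq_zero fun k _ => pownz k s r (by omega)
  -- diagonal entries
  have hdiag : ∀ r : Fin N, B r r = 1 := by
    intro r
    rw [hBapply]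
    rw [Finset.sum_eq_single_of_mem 0 (Finset.mem_range.mpr hN)]
    · rw [pow_zero, Matrix.one_apply_eq]
    · intro k _ hk
      exact pownz k r r (by omega)
  -- upper bound by strong induction on the column index
  have hub : ∀ n : ℕ, ∀ r : Fin N, (r : ℕ) = n → ∀ s, B s r ≤ 1 := by
    intro n
    induction n using Nat.strong_induction_on with
    | _ n ih =>
      intro r hr s
      rcases lt_trichotomy ((s : ℕ)) ((r : ℕ)) with hlt | heq | hgt
      · rw [hrec s r, Matrix.one_apply_ne (by intro e; subst e; omega), zero_add]
        calc ∑ m, B s m * A m r ≤ ∑ m, A m r := by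
              apply Finset.sum_le_sum
              intro m _
              rcases le_or_gt ((r : ℕ)) ((m : ℕ)) with h | h
              · rw [hupper m r (Fin.le_def.mpr h), mul_zero]
              · have hle := ih (m : ℕ) (by omega) m rfl s
                calc B s m * A m r ≤ 1 * A m r :=
                      mul_le_mul_of_nonneg_right hle (h01 m r).1
                  _ = A m r := one_mul _
          _ ≤ 1 := by rw [hcol r]; split <;> norm_num
      · have : s = r := Fin.ext heq
        subst this
        rw [hdiag]
      · rw [hzero s r hgt]; norm_num
  have hinv : (1 - A)⁻¹ = B := by
    apply Matrix.inv_eq_left_inv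
    rw [mul_sub, mul_one, hBA]
    abel
  refine ⟨fun s r => ?_, fun r => ?_⟩
  · rw [hinv]
    exact ⟨hBnn s r, hub (r : ℕ) r rfl s⟩
  · rw [hinv]; exact hdiag r
end

section
/- Let μ, ν be probability measures on the leaves of a weighted directed rooted tree with metric d given by shortest path length. Then the 1-Wasserstein distance W_d(μ, ν) = min over couplings π of ∑ d(x,y) π(x,y) equals ∑_{e ∈ E} w_e |μ(Γ(v_e)) − ν(Γ(v_e))|, where v_e is the endpoint of edge e farther from the root and Γ(v) is the leaf set of the subtree rooted at v. -/
open scoped Classical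

noncomputable def ddist {N : ℕ} (R : Fin N → Fin N → Prop) (w : Fin N → ℝ) (x y : Fin N) : ℝ :=
  ∑ v ∈ Finset.univ.filter (fun v =>
    (Relation.ReflTransGen R v x ∧ ¬ Relation.ReflTransGen R v y) ∨
    (Relation.ReflTransGen R v y ∧ ¬ Relation.ReflTransGen R v x)), w v

lemma ddist_self {N : ℕ} (R : Fin N → Fin N → Prop) (w : Fin N → ℝ) (x : Fin N) :
    ddist R w x x = 0 := by
  unfold ddist
  rw [Finset.filter_false_of_mem, Finset.sum_empty]
  intro v _
  tauto

lemma ddist_symm {N : ℕ} (R : Fin N → Fin N → Prop) (w : Fin N → ℝ) (x y : Fin N) :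
    ddist R w x y = ddist R w y x := by
  unfold ddist
  congr 1
  apply Finset.filter_congr
  intro v _
  tauto

lemma reach_le {N : ℕ} {R : Fin N → Fin N → Prop} (hlt : ∀ i j, R i j → i < j)
    {v x : Fin N} (h : Relation.ReflTransGen R v x) : v ≤ x := by
  induction h with
  | refl => exact le_refl _
  | tail h1 h2 ih => exact ih.trans (hlt _ _ h2).le


lemma reach_parent {N : ℕ} {R : Fin N → Fin N → Prop} {u p : Fin N}
    (hp : R p u) (huniq : ∀ q, R q u → q = p) {v : Fin N} (hvu : v ≠ u) :
    Relation.ReflTransGen R v u ↔ Relation.ReflTransGen R v p := by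
  constructor
  · intro h
    rcases h.cases_tail with h' | ⟨c, hc, hcu⟩
    · exact absurd h'.symm hvu
    · rwa [huniq c hcu] at hc
  · intro h
    exact h.tail hp


lemma ddist_le {N : ℕ} {R : Fin N → Fin N → Prop} {w : Fin N → ℝ} (hw : ∀ v, 0 ≤ w v)
    (hlt : ∀ i j, R i j → i < j) {u p : Fin N} (hpu : R p u)
    (huniq : ∀ q, R q u → q = p) (y : Fin N) :
    ddist R w u y ≤ ddist R w p y + w u := by
  have hup : ¬ Relation.ReflTransGen R u p := fun h =>
    absurd (reach_le hlt h) (not_le.mpr (hlt p u hpu))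
  have hequiv : ∀ v : Fin N, v ≠ u →
      (Relation.ReflTransGen R v u ↔ Relation.ReflTransGen R v p) :=
    fun v hv => reach_parent hpu huniq hv
  by_cases hy : Relation.ReflTransGen R u y
  · have hset : (Finset.univ.filter (fun v =>
          (Relation.ReflTransGen R v p ∧ ¬ Relation.ReflTransGen R v y) ∨
          (Relation.ReflTransGen R v y ∧ ¬ Relation.ReflTransGen R v p)))
        = insert u (Finset.univ.filter (fun v =>
          (Relation.ReflTransGen R v u ∧ ¬ Relation.ReflTransGen R v y) ∨
          (Relation.ReflTransGen R v y ∧ ¬ Relation.ReflTransGen R v u))) := by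
      ext v
      simp only [Finset.mem_filter, Finset.mem_univ, true_and, Finset.mem_insert]
      by_cases hv : v = u
      · subst hv
        simp only [true_or, iff_true]
        tauto
      · rw [hequiv v hv]
        tauto
    have hmem : u ∉ (Finset.univ.filter (fun v =>
          (Relation.ReflTransGen R v u ∧ ¬ Relation.ReflTransGen R v y) ∨
          (Relation.ReflTransGen R v y ∧ ¬ Relation.ReflTransGen R v u))) := by
      simp only [Finset.mem_filter, Finset.mem_univ, true_and]
      tauto
    have hpy : ddist R w p y = w u + ddist R w u y := by
      unfold ddist
      rw [hset, Finset.sum_insert hmem]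
    linarith [hw u]
  · have hset : (Finset.univ.filter (fun v =>
          (Relation.ReflTransGen R v u ∧ ¬ Relation.ReflTransGen R v y) ∨
          (Relation.ReflTransGen R v y ∧ ¬ Relation.ReflTransGen R v u)))
        = insert u (Finset.univ.filter (fun v =>
          (Relation.ReflTransGen R v p ∧ ¬ Relation.ReflTransGen R v y) ∨
          (Relation.ReflTransGen R v y ∧ ¬ Relation.ReflTransGen R v p))) := by
      ext v
      simp only [Finset.mem_filter, Finset.mem_univ, true_and, Finset.mem_insert]
      by_cases hv : v = u
      · subst hv
        simp only [true_or, iff_true]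
        left
        exact ⟨Relation.ReflTransGen.refl, hy⟩
      · rw [hequiv v hv]
        tauto
    have hmem : u ∉ (Finset.univ.filter (fun v =>
          (Relation.ReflTransGen R v p ∧ ¬ Relation.ReflTransGen R v y) ∨
          (Relation.ReflTransGen R v y ∧ ¬ Relation.ReflTransGen R v p))) := by
      simp only [Finset.mem_filter, Finset.mem_univ, true_and]
      tauto
    have huy : ddist R w u y = w u + ddist R w p y := by
      unfold ddist
      rw [hset, Finset.sum_insert hmem]
    linarith [hw u]

lemma step {N : ℕ} (hN : 0 < N) {R : Fin N → Fin N → Prop} {w : Fin N → ℝ}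
    (hlt : ∀ i j, R i j → i < j)
    (hpar : ∀ u : Fin N, u ≠ ⟨0, hN⟩ → ∃! p, R p u)
    (hw : ∀ v, 0 ≤ w v)
    (μ ν : Fin N → ℝ) (hμ0 : ∀ x, 0 ≤ μ x) (hν0 : ∀ x, 0 ≤ ν x)
    (hsum : ∑ x, μ x = ∑ x, ν x)
    (u : Fin N) (hu : ν u < μ u) (hmax : ∀ x, μ x ≠ ν x → x ≤ u)
    (IH : ∀ μ' ν' : Fin N → ℝ, (∀ x, 0 ≤ μ' x) → (∀ x, 0 ≤ ν' x) →
      (∑ x, μ' x = ∑ x, ν' x) →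
      ((∑ x ∈ Finset.univ.filter (fun x => μ' x ≠ ν' x), 2 ^ (x : ℕ)) <
        (∑ x ∈ Finset.univ.filter (fun x => μ x ≠ ν x), 2 ^ (x : ℕ))) →
      ∃ π : Fin N → Fin N → ℝ, (∀ x y, 0 ≤ π x y) ∧ (∀ x, ∑ y, π x y = μ' x) ∧
        (∀ y, ∑ x, π x y = ν' y) ∧
        ∑ x, ∑ y, π x y * ddist R w x y ≤
          ∑ v, w v * |∑ x ∈ Finset.univ.filter (fun x => Relation.ReflTransGen R v x), (μ' x - ν' x)|) :
    ∃ π : Fin N → Fin N → ℝ, (∀ x y, 0 ≤ π x y) ∧ (∀ x, ∑ y, π x y = μ x) ∧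
      (∀ y, ∑ x, π x y = ν y) ∧
      ∑ x, ∑ y, π x y * ddist R w x y ≤
        ∑ v, w v * |∑ x ∈ Finset.univ.filter (fun x => Relation.ReflTransGen R v x), (μ x - ν x)| := by
  -- u is not the root
  have hroot : u ≠ ⟨0, hN⟩ := by
    intro h
    have h0 : ∑ x, (μ x - ν x) = 0 := by
      rw [Finset.sum_sub_distrib, hsum, sub_self]
    have h1 : ∑ x, (μ x - ν x) = μ u - ν u := by
      apply Finset.sum_eq_single
      · intro x _ hxu
        by_contra hne
        have hx := hmax x (sub_ne_zero.mp hne)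
        have : u ≤ x := by
          rw [h]
          exact Fin.mk_le_of_le_val (Nat.zero_le _)
        exact hxu (le_antisymm hx this)
      · intro h'
        exact absurd (Finset.mem_univ u) h'
    rw [h1] at h0
    linarith
  obtain ⟨p, hpu, hpuniq'⟩ := hpar u hroot
  have hpuniq : ∀ q, R q u → q = p := fun q hq => hpuniq' q hq
  have hplt : p < u := hlt p u hpu
  have hpne : p ≠ u := ne_of_lt hplt
  set m := μ u - ν u with hm
  have hm0 : 0 < m := sub_pos.mpr hu
  set μ' := fun x => μ x + (if x = p then m else 0) - (if x = u then m else 0) with hμ'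
  have hμ'u : μ' u = ν u := by
    show (μ u + (if u = p then m else 0)) - (if u = u then m else 0) = ν u
    rw [if_neg (Ne.symm hpne), if_pos rfl, hm]
    ring
  have hμ'p : μ' p = μ p + m := by
    show (μ p + (if p = p then m else 0)) - (if p = u then m else 0) = μ p + m
    rw [if_pos rfl, if_neg hpne]
    ring
  have hμ'x : ∀ x, x ≠ p → x ≠ u → μ' x = μ x := by
    intro x h1 h2
    simp only [hμ']
    rw [if_neg h1, if_neg h2]
    ring
  have hμ'0 : ∀ x, 0 ≤ μ' x := by
    intro x
    by_cases h1 : x = u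
    · rw [h1, hμ'u]; exact hν0 u
    · by_cases h2 : x = p
      · rw [h2, hμ'p]; have := hμ0 p; linarith
      · rw [hμ'x x h2 h1]; exact hμ0 x
  have hsum' : ∑ x, μ' x = ∑ x, ν x := by
    simp only [hμ']
    rw [Finset.sum_sub_distrib, Finset.sum_add_distrib,
      Finset.sum_ite_eq' Finset.univ p (fun _ => m),
      Finset.sum_ite_eq' Finset.univ u (fun _ => m)]
    simp [hsum]
  -- measure decrease
  have huS : u ∈ Finset.univ.filter (fun x => μ x ≠ ν x) := by
    simp only [Finset.mem_filter, Finset.mem_univ, true_and]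
    exact ne_of_gt hu
  have hmeas : (∑ x ∈ Finset.univ.filter (fun x => μ' x ≠ ν x), 2 ^ (x : ℕ)) <
      (∑ x ∈ Finset.univ.filter (fun x => μ x ≠ ν x), 2 ^ (x : ℕ)) := by
    have hsub : Finset.univ.filter (fun x => μ' x ≠ ν x) ⊆
        insert p ((Finset.univ.filter (fun x => μ x ≠ ν x)).erase u) := by
      intro x hx
      simp only [Finset.mem_filter, Finset.mem_univ, true_and] at hx
      by_cases h1 : x = p
      · simp [h1]
      · by_cases h2 : x = u
        · exfalso; rw [h2, hμ'u] at hx; exact hx rfl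
        · rw [Finset.mem_insert, Finset.mem_erase]
          right
          refine ⟨h2, ?_⟩
          simp only [Finset.mem_filter, Finset.mem_univ, true_and]
          rwa [hμ'x x h1 h2] at hx
    calc (∑ x ∈ Finset.univ.filter (fun x => μ' x ≠ ν x), 2 ^ (x : ℕ))
        ≤ ∑ x ∈ insert p ((Finset.univ.filter (fun x => μ x ≠ ν x)).erase u), 2 ^ (x : ℕ) :=
          Finset.sum_le_sum_of_subset hsub
      _ ≤ 2 ^ (p : ℕ) + ∑ x ∈ (Finset.univ.filter (fun x => μ x ≠ ν x)).erase u, 2 ^ (x : ℕ) := by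
          by_cases hp' : p ∈ (Finset.univ.filter (fun x => μ x ≠ ν x)).erase u
          · rw [Finset.insert_eq_self.mpr hp']
            exact Nat.le_add_left _ _
          · rw [Finset.sum_insert hp']
      _ < 2 ^ (u : ℕ) + ∑ x ∈ (Finset.univ.filter (fun x => μ x ≠ ν x)).erase u, 2 ^ (x : ℕ) := by
          have : (2:ℕ) ^ (p : ℕ) < 2 ^ (u : ℕ) :=
            Nat.pow_lt_pow_right (by norm_num) hplt
          omega
      _ = ∑ x ∈ Finset.univ.filter (fun x => μ x ≠ ν x), 2 ^ (x : ℕ) :=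
          Finset.add_sum_erase _ (fun x : Fin N => 2 ^ (x : ℕ)) huS
  obtain ⟨π', hπ'0, hrow, hcol, hcost⟩ := IH μ' ν hμ'0 hν0 hsum' hmeas
  -- formula identity
  have hequiv : ∀ v : Fin N, v ≠ u →
      (Relation.ReflTransGen R v u ↔ Relation.ReflTransGen R v p) :=
    fun v hv => reach_parent hpu hpuniq hv
  have hGeq : ∀ v : Fin N, v ≠ u →
      (∑ x ∈ Finset.univ.filter (fun x => Relation.ReflTransGen R v x), (μ' x - ν x)) =
      (∑ x ∈ Finset.univ.filter (fun x => Relation.ReflTransGen R v x), (μ x - ν x)) := by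
    intro v hv
    have he : ∀ x, μ' x - ν x = (μ x - ν x) + (if x = p then m else 0) - (if x = u then m else 0) := by
      intro x; simp only [hμ']; ring
    simp only [he]
    rw [Finset.sum_sub_distrib, Finset.sum_add_distrib,
      Finset.sum_ite_eq' _ p (fun _ => m), Finset.sum_ite_eq' _ u (fun _ => m)]
    simp only [Finset.mem_filter, Finset.mem_univ, true_and]
    rw [hequiv v hv]
    by_cases hvp : Relation.ReflTransGen R v p <;> simp [hvp]
  have htail : ∀ x : Fin N, Relation.ReflTransGen R u x → x ≠ u → μ x - ν x = 0 := by
    intro x hx hxu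
    by_contra hne
    have h1 := hmax x (sub_ne_zero.mp hne)
    exact hxu (le_antisymm h1 (reach_le hlt hx))
  have hGu : (∑ x ∈ Finset.univ.filter (fun x => Relation.ReflTransGen R u x), (μ x - ν x)) = m := by
    rw [Finset.sum_eq_single u]
    · intro b hb hbu
      simp only [Finset.mem_filter, Finset.mem_univ, true_and] at hb
      exact htail b hb hbu
    · intro h'
      exact absurd (by simp [Finset.mem_filter]; exact Relation.ReflTransGen.refl) h'
  have hGu' : (∑ x ∈ Finset.univ.filter (fun x => Relation.ReflTransGen R u x), (μ' x - ν x)) = 0 := by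
    rw [Finset.sum_eq_single u]
    · rw [hμ'u]; ring
    · intro b hb hbu
      simp only [Finset.mem_filter, Finset.mem_univ, true_and] at hb
      have hbp : b ≠ p := by
        intro h
        have h2 := reach_le hlt hb
        rw [h] at h2
        exact absurd (lt_of_le_of_lt h2 hplt) (lt_irrefl u)
      rw [hμ'x b hbp hbu]
      exact htail b hb hbu
    · intro h'
      exact absurd (by simp [Finset.mem_filter]; exact Relation.ReflTransGen.refl) h'
  have hF : (∑ v, w v * |∑ x ∈ Finset.univ.filter (fun x => Relation.ReflTransGen R v x), (μ x - ν x)|) =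
      (∑ v, w v * |∑ x ∈ Finset.univ.filter (fun x => Relation.ReflTransGen R v x), (μ' x - ν x)|) + w u * m := by
    rw [← Finset.add_sum_erase Finset.univ
          (fun v => w v * |∑ x ∈ Finset.univ.filter (fun x => Relation.ReflTransGen R v x), (μ x - ν x)|)
          (Finset.mem_univ u),
        ← Finset.add_sum_erase Finset.univ
          (fun v => w v * |∑ x ∈ Finset.univ.filter (fun x => Relation.ReflTransGen R v x), (μ' x - ν x)|)
          (Finset.mem_univ u)]
    rw [hGu, hGu', abs_of_pos hm0]
    have he2 : (∑ v ∈ Finset.univ.erase u, w v * |∑ x ∈ Finset.univ.filter (fun x => Relation.ReflTransGen R v x), (μ' x - ν x)|)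
        = ∑ v ∈ Finset.univ.erase u, w v * |∑ x ∈ Finset.univ.filter (fun x => Relation.ReflTransGen R v x), (μ x - ν x)| := by
      apply Finset.sum_congr rfl
      intro v hv
      rw [hGeq v (Finset.ne_of_mem_erase hv)]
    rw [he2]
    simp
    ring
  -- coupling construction
  set t := m / (μ p + m) with ht
  have hden : 0 < μ p + m := by have := hμ0 p; linarith
  have ht0 : 0 ≤ t := div_nonneg hm0.le hden.le
  have ht1 : t ≤ 1 := by
    rw [ht, div_le_one hden]
    have := hμ0 p; linarith
  have htm : t * (μ p + m) = m := div_mul_cancel₀ m (ne_of_gt hden)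
  set π := fun x y => π' x y + (if x = u then t * π' p y else 0) - (if x = p then t * π' p y else 0) with hπ
  have hπu : ∀ y, π u y = π' u y + t * π' p y := by
    intro y
    show (π' u y + (if u = u then t * π' p y else 0)) - (if u = p then t * π' p y else 0) = _
    rw [if_pos rfl, if_neg (Ne.symm hpne)]
    ring
  have hπp : ∀ y, π p y = π' p y - t * π' p y := by
    intro y
    show (π' p y + (if p = u then t * π' p y else 0)) - (if p = p then t * π' p y else 0) = _
    rw [if_neg hpne, if_pos rfl]
    ring
  have hπo : ∀ x, x ≠ u → x ≠ p → ∀ y, π x y = π' x y := by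
    intro x h1 h2 y
    simp only [hπ]
    rw [if_neg h1, if_neg h2]
    ring
  have hπ0 : ∀ x y, 0 ≤ π x y := by
    intro x y
    by_cases h1 : x = u
    · rw [h1, hπu y]
      have h3 := mul_nonneg ht0 (hπ'0 p y)
      have h4 := hπ'0 u y
      linarith
    · by_cases h2 : x = p
      · rw [h2, hπp y]
        nlinarith [hπ'0 p y, ht1]
      · rw [hπo x h1 h2 y]
        exact hπ'0 x y
  have hrow2 : ∀ x, ∑ y, π x y = μ x := by
    intro x
    by_cases h1 : x = u
    · rw [h1]
      simp only [hπu]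
      rw [Finset.sum_add_distrib, ← Finset.mul_sum, hrow u, hrow p, hμ'u, hμ'p, htm, hm]
      ring
    · by_cases h2 : x = p
      · rw [h2]
        simp only [hπp]
        rw [Finset.sum_sub_distrib, ← Finset.mul_sum, hrow p, hμ'p, htm]
        ring
      · simp only [hπo x h1 h2]
        rw [hrow x, hμ'x x h2 h1]
  have hcol2 : ∀ y, ∑ x, π x y = ν y := by
    intro y
    simp only [hπ]
    rw [Finset.sum_sub_distrib, Finset.sum_add_distrib,
      Finset.sum_ite_eq' Finset.univ u (fun _ => t * π' p y),
      Finset.sum_ite_eq' Finset.univ p (fun _ => t * π' p y), hcol y]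
    simp
  have hite : ∀ z : Fin N, (∑ x, ∑ y, (if x = z then t * π' p y else 0) * ddist R w x y)
      = ∑ y, t * π' p y * ddist R w z y := by
    intro z
    rw [Finset.sum_eq_single z]
    · simp
    · intro b _ hb
      simp [hb]
    · intro h'
      exact absurd (Finset.mem_univ z) h'
  have hcost2 : ∑ x, ∑ y, π x y * ddist R w x y =
      (∑ x, ∑ y, π' x y * ddist R w x y)
      + (∑ y, t * π' p y * ddist R w u y) - (∑ y, t * π' p y * ddist R w p y) := by
    have he : ∀ x y, π x y * ddist R w x y = π' x y * ddist R w x y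
        + (if x = u then t * π' p y else 0) * ddist R w x y
        - (if x = p then t * π' p y else 0) * ddist R w x y := by
      intro x y; simp only [hπ]; ring
    simp only [he, Finset.sum_sub_distrib, Finset.sum_add_distrib]
    rw [hite u, hite p]
  have hbound : (∑ y, t * π' p y * ddist R w u y) ≤
      (∑ y, t * π' p y * ddist R w p y) + w u * m := by
    have h1 : ∀ y, t * π' p y * ddist R w u y ≤ t * π' p y * ddist R w p y + t * π' p y * w u := by
      intro y
      have hnn : 0 ≤ t * π' p y := mul_nonneg ht0 (hπ'0 p y)
      have := mul_le_mul_of_nonneg_left (ddist_le hw hlt hpu hpuniq y) hnn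
      nlinarith
    calc (∑ y, t * π' p y * ddist R w u y)
        ≤ ∑ y, (t * π' p y * ddist R w p y + t * π' p y * w u) :=
          Finset.sum_le_sum (fun y _ => h1 y)
      _ = (∑ y, t * π' p y * ddist R w p y) + (∑ y, t * π' p y) * w u := by
          rw [Finset.sum_add_distrib, ← Finset.sum_mul]
      _ = (∑ y, t * π' p y * ddist R w p y) + w u * m := by
          rw [← Finset.mul_sum, hrow p, hμ'p, htm]
          ring
  refine ⟨π, hπ0, hrow2, hcol2, ?_⟩
  rw [hcost2, hF]
  linarith

lemma auxmain {N : ℕ} (hN : 0 < N) {R : Fin N → Fin N → Prop} {w : Fin N → ℝ}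
    (hlt : ∀ i j, R i j → i < j)
    (hpar : ∀ u : Fin N, u ≠ ⟨0, hN⟩ → ∃! p, R p u)
    (hw : ∀ v, 0 ≤ w v) :
    ∀ n : ℕ, ∀ μ ν : Fin N → ℝ, (∀ x, 0 ≤ μ x) → (∀ x, 0 ≤ ν x) →
      (∑ x, μ x = ∑ x, ν x) →
      ((∑ x ∈ Finset.univ.filter (fun x => μ x ≠ ν x), 2 ^ (x : ℕ)) ≤ n) →
      ∃ π : Fin N → Fin N → ℝ, (∀ x y, 0 ≤ π x y) ∧ (∀ x, ∑ y, π x y = μ x) ∧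
        (∀ y, ∑ x, π x y = ν y) ∧
        ∑ x, ∑ y, π x y * ddist R w x y ≤
          ∑ v, w v * |∑ x ∈ Finset.univ.filter (fun x => Relation.ReflTransGen R v x), (μ x - ν x)| := by
  intro n
  induction n using Nat.strong_induction_on with
  | _ n IHn =>
  intro μ ν hμ0 hν0 hsum hn
  by_cases hS : Finset.univ.filter (fun x => μ x ≠ ν x) = ∅
  · -- base case: μ = ν
    have hμν : ∀ x, μ x = ν x := by
      intro x
      by_contra hx
      have : x ∈ Finset.univ.filter (fun x => μ x ≠ ν x) := by
        simp [Finset.mem_filter, hx]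
      rw [hS] at this
      exact absurd this (Finset.notMem_empty x)
    refine ⟨fun x y => if x = y then μ x else 0, ?_, ?_, ?_, ?_⟩
    · intro x y
      show (0:ℝ) ≤ if x = y then μ x else 0
      by_cases h : x = y
      · rw [if_pos h]; exact hμ0 x
      · rw [if_neg h]
    · intro x
      simp [Finset.sum_ite_eq Finset.univ x (fun _ => μ x)]
    · intro y
      rw [Finset.sum_ite_eq' Finset.univ y μ]
      simp [hμν y]
    · have : ∀ x : Fin N, ∑ y, (if x = y then μ x else 0) * ddist R w x y = 0 := by
        intro x
        rw [Finset.sum_eq_zero]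
        intro y _
        by_cases h : x = y
        · rw [h, ddist_self]
          ring
        · simp [h]
      simp only [this, Finset.sum_const_zero]
      apply Finset.sum_nonneg
      intro v _
      exact mul_nonneg (hw v) (abs_nonneg _)
  · -- inductive case
    obtain ⟨u, huS, humax⟩ :=
      Finset.exists_max_image (Finset.univ.filter (fun x => μ x ≠ ν x)) id
        (Finset.nonempty_of_ne_empty hS)
    simp only [Finset.mem_filter, Finset.mem_univ, true_and] at huS
    have hmax : ∀ x, μ x ≠ ν x → x ≤ u := by
      intro x hx
      exact humax x (by simp [Finset.mem_filter, hx])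
    have hmeasle : (∑ x ∈ Finset.univ.filter (fun x => μ x ≠ ν x), 2 ^ (x : ℕ)) ≤ n := hn
    rcases lt_or_gt_of_ne huS with h | h
    ·
      -- swap roles
      have hSswap : Finset.univ.filter (fun x => ν x ≠ μ x) = Finset.univ.filter (fun x => μ x ≠ ν x) := by
        apply Finset.filter_congr
        intro x _
        simp [ne_comm]
      obtain ⟨π', h0, h1, h2, h3⟩ :=
        step hN hlt hpar hw ν μ hν0 hμ0 hsum.symm u h
          (fun x hx => hmax x (Ne.symm hx))
          (by
            intro μ'' ν'' a0 b0 csum hdec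
            rw [hSswap] at hdec
            exact IHn _ (lt_of_lt_of_le hdec hmeasle) μ'' ν'' a0 b0 csum le_rfl)
      refine ⟨fun x y => π' y x, fun x y => h0 y x, fun x => h2 x, fun y => h1 y, ?_⟩
      have hflip : ∑ x, ∑ y, π' y x * ddist R w x y = ∑ x, ∑ y, π' x y * ddist R w x y := by
        rw [Finset.sum_comm]
        apply Finset.sum_congr rfl
        intro x _
        apply Finset.sum_congr rfl
        intro y _
        rw [ddist_symm]
      rw [hflip]
      have habs : ∀ v : Fin N,
          |∑ x ∈ Finset.univ.filter (fun x => Relation.ReflTransGen R v x), (ν x - μ x)| =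
          |∑ x ∈ Finset.univ.filter (fun x => Relation.ReflTransGen R v x), (μ x - ν x)| := by
        intro v
        rw [Finset.sum_sub_distrib, Finset.sum_sub_distrib, abs_sub_comm]
      simp only [habs] at h3
      exact h3
    · -- ν u < μ u
      exact step hN hlt hpar hw μ ν hμ0 hν0 hsum u h hmax
        (fun μ'' ν'' a0 b0 csum hdec =>
          IHn _ (lt_of_lt_of_le hdec hmeasle) μ'' ν'' a0 b0 csum le_rfl)

/-- for probability measures `μ, ν` supported on the leaves of a weighted
directed rooted tree (adjacency matrix `A`, edge-above-`v` weights `w_v ≥ 0`, tree metric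
`d` given in closed form by the path-weight formula), the 1-Wasserstein distance
`min_π ∑ d(x,y) π(x,y)` over couplings `π` of `μ` and `ν` is attained and equals
`∑_v w_v |μ(Γ(v)) - ν(Γ(v))|`, where `Γ(v)` is the leaf set of the subtree rooted at `v`. -/
theorem stmt12 {N : ℕ} (hN : 0 < N) (A : Matrix (Fin N) (Fin N) ℝ)
    (h01 : ∀ i j, A i j = 0 ∨ A i j = 1)
    (hupper : ∀ i j : Fin N, j ≤ i → A i j = 0)
    (hcol : ∀ j : Fin N, (∑ i, A i j) = if j = ⟨0, hN⟩ then 0 else 1)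
    (w : Fin N → ℝ) (hw : ∀ v, 0 ≤ w v)
    (R : Fin N → Fin N → Prop) (hR : ∀ i j, R i j ↔ A i j = 1)
    (leaf : Fin N → Prop) (hleaf : ∀ x, leaf x ↔ ∀ z, ¬ R x z)
    (d : Fin N → Fin N → ℝ)
    -- the tree (shortest-path) metric between leaves, in closed form: the total weight of
    -- the edges lying below exactly one of `x`, `y`
    (hd : ∀ x y, leaf x → leaf y → d x y =
      ∑ v ∈ Finset.univ.filter (fun v =>
        (Relation.ReflTransGen R v x ∧ ¬ Relation.ReflTransGen R v y) ∨
        (Relation.ReflTransGen R v y ∧ ¬ Relation.ReflTransGen R v x)), w v)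
    (μ ν : Fin N → ℝ)
    (hμ0 : ∀ x, 0 ≤ μ x) (hν0 : ∀ x, 0 ≤ ν x)
    (hμleaf : ∀ x, μ x ≠ 0 → leaf x) (hνleaf : ∀ x, ν x ≠ 0 → leaf x)
    (hμ1 : ∑ x, μ x = 1) (hν1 : ∑ x, ν x = 1) :
    IsLeast {c : ℝ | ∃ π : Fin N → Fin N → ℝ,
        (∀ x y, 0 ≤ π x y) ∧ (∀ x, ∑ y, π x y = μ x) ∧ (∀ y, ∑ x, π x y = ν y) ∧
        c = ∑ x, ∑ y, π x y * d x y}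
      (∑ v, w v *
        |(∑ x ∈ Finset.univ.filter (fun x => leaf x ∧ Relation.ReflTransGen R v x), μ x) -
         (∑ x ∈ Finset.univ.filter (fun x => leaf x ∧ Relation.ReflTransGen R v x), ν x)|) := by
  have hlt : ∀ i j, R i j → i < j := by
    intro i j h
    rw [hR] at h
    by_contra hle
    rw [hupper i j (le_of_not_gt hle)] at h
    norm_num at h
  have hA0 : ∀ i j, 0 ≤ A i j := by
    intro i j
    rcases h01 i j with h | h <;> rw [h] <;> norm_num
  have hpar : ∀ u : Fin N, u ≠ ⟨0, hN⟩ → ∃! p, R p u := by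
    intro u hu
    have hc := hcol u
    rw [if_neg hu] at hc
    have hex : ∃ p, R p u := by
      by_contra hno
      push_neg at hno
      have hz : ∀ i, A i u = 0 := by
        intro i
        rcases h01 i u with h | h
        · exact h
        · exact absurd ((hR i u).mpr h) (hno i)
      rw [Finset.sum_congr rfl (fun i _ => hz i)] at hc
      simp at hc
    obtain ⟨p, hp⟩ := hex
    refine ⟨p, hp, ?_⟩
    intro q hq
    by_contra hqp
    have h2 : (2:ℝ) ≤ ∑ i, A i u := by
      have hle := Finset.sum_le_sum_of_subset_of_nonneg
        (Finset.subset_univ ({q, p} : Finset (Fin N)))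
        (fun i _ _ => hA0 i u)
      rw [Finset.sum_pair hqp, (hR q u).mp hq, (hR p u).mp hp] at hle
      linarith
    rw [hc] at h2
    linarith
  -- bridge between leaf-filtered sums and full reachability sums
  have hbridge : ∀ v : Fin N,
      (∑ x ∈ Finset.univ.filter (fun x => leaf x ∧ Relation.ReflTransGen R v x), μ x) -
      (∑ x ∈ Finset.univ.filter (fun x => leaf x ∧ Relation.ReflTransGen R v x), ν x) =
      ∑ x ∈ Finset.univ.filter (fun x => Relation.ReflTransGen R v x), (μ x - ν x) := by
    intro v
    have hμb : (∑ x ∈ Finset.univ.filter (fun x => leaf x ∧ Relation.ReflTransGen R v x), μ x)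
        = ∑ x ∈ Finset.univ.filter (fun x => Relation.ReflTransGen R v x), μ x := by
      apply Finset.sum_subset
      · intro x hx
        simp only [Finset.mem_filter, Finset.mem_univ, true_and] at hx ⊢
        exact hx.2
      · intro x hx hnx
        simp only [Finset.mem_filter, Finset.mem_univ, true_and] at hx hnx
        by_contra h
        exact hnx ⟨hμleaf x h, hx⟩
    have hνb : (∑ x ∈ Finset.univ.filter (fun x => leaf x ∧ Relation.ReflTransGen R v x), ν x)
        = ∑ x ∈ Finset.univ.filter (fun x => Relation.ReflTransGen R v x), ν x := by
      apply Finset.sum_subset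
      · intro x hx
        simp only [Finset.mem_filter, Finset.mem_univ, true_and] at hx ⊢
        exact hx.2
      · intro x hx hnx
        simp only [Finset.mem_filter, Finset.mem_univ, true_and] at hx hnx
        by_contra h
        exact hnx ⟨hνleaf x h, hx⟩
    rw [hμb, hνb, ← Finset.sum_sub_distrib]
  have hF : (∑ v, w v *
        |(∑ x ∈ Finset.univ.filter (fun x => leaf x ∧ Relation.ReflTransGen R v x), μ x) -
         (∑ x ∈ Finset.univ.filter (fun x => leaf x ∧ Relation.ReflTransGen R v x), ν x)|)
      = ∑ v, w v * |∑ x ∈ Finset.univ.filter (fun x => Relation.ReflTransGen R v x), (μ x - ν x)| := by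
    apply Finset.sum_congr rfl
    intro v _
    rw [hbridge v]
  -- support of couplings is on leaves
  have hsupp : ∀ (π : Fin N → Fin N → ℝ), (∀ x y, 0 ≤ π x y) → (∀ x, ∑ y, π x y = μ x) →
      (∀ y, ∑ x, π x y = ν y) → ∀ x y, π x y ≠ 0 → leaf x ∧ leaf y := by
    intro π h0 h1 h2 x y hxy
    have hpos : 0 < π x y := lt_of_le_of_ne (h0 x y) (Ne.symm hxy)
    have hx : π x y ≤ μ x := by
      rw [← h1 x]
      exact Finset.single_le_sum (fun z _ => h0 x z) (Finset.mem_univ y)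
    have hy : π x y ≤ ν y := by
      rw [← h2 y]
      exact Finset.single_le_sum (fun z _ => h0 z y) (Finset.mem_univ x)
    exact ⟨hμleaf x (ne_of_gt (lt_of_lt_of_le hpos hx)),
      hνleaf y (ne_of_gt (lt_of_lt_of_le hpos hy))⟩
  -- rewrite cost through ddist
  have hcosteq : ∀ (π : Fin N → Fin N → ℝ), (∀ x y, 0 ≤ π x y) → (∀ x, ∑ y, π x y = μ x) →
      (∀ y, ∑ x, π x y = ν y) →
      (∑ x, ∑ y, π x y * d x y) = ∑ x, ∑ y, π x y * ddist R w x y := by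
    intro π h0 h1 h2
    apply Finset.sum_congr rfl
    intro x _
    apply Finset.sum_congr rfl
    intro y _
    by_cases hxy : π x y = 0
    · rw [hxy]
      ring
    · obtain ⟨hlx, hly⟩ := hsupp π h0 h1 h2 x y hxy
      rw [hd x y hlx hly]
      simp only [ddist]
  -- lower bound: every coupling costs at least the formula
  have hlow : ∀ (π : Fin N → Fin N → ℝ), (∀ x y, 0 ≤ π x y) → (∀ x, ∑ y, π x y = μ x) →
      (∀ y, ∑ x, π x y = ν y) →
      (∑ v, w v * |∑ x ∈ Finset.univ.filter (fun x => Relation.ReflTransGen R v x), (μ x - ν x)|)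
        ≤ ∑ x, ∑ y, π x y * ddist R w x y := by
    intro π h0 h1 h2
    have hexp : (∑ x, ∑ y, π x y * ddist R w x y) =
        ∑ v, ∑ x, ∑ y, π x y * (if (Relation.ReflTransGen R v x ∧ ¬ Relation.ReflTransGen R v y) ∨
          (Relation.ReflTransGen R v y ∧ ¬ Relation.ReflTransGen R v x) then w v else 0) := by
      simp only [ddist, Finset.sum_filter, Finset.mul_sum]
      calc (∑ x, ∑ y, ∑ v, π x y * (if (Relation.ReflTransGen R v x ∧ ¬ Relation.ReflTransGen R v y) ∨
              (Relation.ReflTransGen R v y ∧ ¬ Relation.ReflTransGen R v x) then w v else 0))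
          = ∑ x, ∑ v, ∑ y, π x y * (if (Relation.ReflTransGen R v x ∧ ¬ Relation.ReflTransGen R v y) ∨
              (Relation.ReflTransGen R v y ∧ ¬ Relation.ReflTransGen R v x) then w v else 0) :=
            Finset.sum_congr rfl (fun x _ => Finset.sum_comm)
        _ = ∑ v, ∑ x, ∑ y, π x y * (if (Relation.ReflTransGen R v x ∧ ¬ Relation.ReflTransGen R v y) ∨
              (Relation.ReflTransGen R v y ∧ ¬ Relation.ReflTransGen R v x) then w v else 0) :=
            Finset.sum_comm
    rw [hexp]
    apply Finset.sum_le_sum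
    intro v _
    -- per-edge inequality
    set a := fun x => if Relation.ReflTransGen R v x then (1:ℝ) else 0 with ha
    have hG : (∑ x ∈ Finset.univ.filter (fun x => Relation.ReflTransGen R v x), (μ x - ν x))
        = ∑ x, (μ x - ν x) * a x := by
      rw [Finset.sum_filter]
      apply Finset.sum_congr rfl
      intro x _
      by_cases hx : Relation.ReflTransGen R v x
      · rw [if_pos hx]
        simp only [ha]
        rw [if_pos hx]
        ring
      · rw [if_neg hx]
        simp only [ha]
        rw [if_neg hx]
        ring
    have hB : (∑ x, (μ x - ν x) * a x) = ∑ x, ∑ y, π x y * (a x - a y) := by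
      have hx1 : ∀ x, (∑ y, π x y * (a x - a y)) = μ x * a x - ∑ y, π x y * a y := by
        intro x
        simp only [mul_sub]
        rw [Finset.sum_sub_distrib, ← Finset.sum_mul, h1 x]
      rw [Finset.sum_congr rfl (fun x (_ : x ∈ Finset.univ) => hx1 x), Finset.sum_sub_distrib]
      have hx2 : (∑ x, ∑ y, π x y * a y) = ∑ y, ν y * a y := by
        rw [Finset.sum_comm]
        apply Finset.sum_congr rfl
        intro y _
        rw [← Finset.sum_mul, h2 y]
      rw [hx2, ← Finset.sum_sub_distrib]
      apply Finset.sum_congr rfl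
      intro x _
      ring
    have habs : |∑ x, ∑ y, π x y * (a x - a y)| ≤ ∑ x, ∑ y, π x y * |a x - a y| := by
      refine (Finset.abs_sum_le_sum_abs _ _).trans (Finset.sum_le_sum fun x _ => ?_)
      refine (Finset.abs_sum_le_sum_abs _ _).trans (Finset.sum_le_sum fun y _ => ?_)
      rw [abs_mul, abs_of_nonneg (h0 x y)]
    have hchi : ∀ x y, w v * (π x y * |a x - a y|) =
        π x y * (if (Relation.ReflTransGen R v x ∧ ¬ Relation.ReflTransGen R v y) ∨
          (Relation.ReflTransGen R v y ∧ ¬ Relation.ReflTransGen R v x) then w v else 0) := by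
      intro x y
      simp only [ha]
      by_cases hx : Relation.ReflTransGen R v x <;>
        by_cases hy : Relation.ReflTransGen R v y <;>
          simp [hx, hy] <;> ring
    calc w v * |∑ x ∈ Finset.univ.filter (fun x => Relation.ReflTransGen R v x), (μ x - ν x)|
        = w v * |∑ x, ∑ y, π x y * (a x - a y)| := by rw [hG, hB]
      _ ≤ w v * (∑ x, ∑ y, π x y * |a x - a y|) :=
          mul_le_mul_of_nonneg_left habs (hw v)
      _ = ∑ x, ∑ y, π x y * (if (Relation.ReflTransGen R v x ∧ ¬ Relation.ReflTransGen R v y) ∨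
            (Relation.ReflTransGen R v y ∧ ¬ Relation.ReflTransGen R v x) then w v else 0) := by
          rw [Finset.mul_sum]
          apply Finset.sum_congr rfl
          intro x _
          rw [Finset.mul_sum]
          apply Finset.sum_congr rfl
          intro y _
          exact hchi x y
  -- assemble
  obtain ⟨π₀, p0, p1, p2, p3⟩ := auxmain hN hlt hpar hw
    (∑ x ∈ Finset.univ.filter (fun x => μ x ≠ ν x), 2 ^ (x : ℕ))
    μ ν hμ0 hν0 (by rw [hμ1, hν1]) le_rfl
  constructor
  · refine ⟨π₀, p0, p1, p2, ?_⟩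
    rw [hF, hcosteq π₀ p0 p1 p2]
    exact le_antisymm (hlow π₀ p0 p1 p2) p3
  · intro c hc
    obtain ⟨π, q0, q1, q2, qc⟩ := hc
    rw [qc, hcosteq π q0 q1 q2, hF]
    exact hlow π q0 q1 q2
end
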